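/- The coproduct Δ on 𝒜 is a chain map: with Δ(ξ_i) = ξ_i ⊗ 1 + 1 ⊗ ξ_i and Δ(u_k) = u_k ⊗ 1 + 1 ⊗ u_k + ∑_i h_{k-2}(x_i, x_i', x_i'') ξ_i ⊗ ξ_i, one has d(Δ(u_k)) = Δ(d(u_k)), i.e. ∑_i [h_{k-1}(x_i,x_i')ξ_i⊗1 + h_{k-1}(x_i',x_i'')1⊗ξ_i + h_{k-2}(x_i,x_i',x_i'')((x_i - x_i')1⊗ξ_i + (x_i'' - x_i')ξ_i⊗1)] = ∑_i h_{k-1}(x_i, x_i'')(ξ_i⊗1 + 1⊗ξ_i). -/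

import Mathlib

/-!
Coefficientwise in `ξ_i ⊗ 1` and `1 ⊗ ξ_i` the claim is a pair of identities
`h_{m+1}(x,z) = h_{m+1}(x,y) + (z - y) h_m(x,y,z) = h_{m+1}(y,z) + (x - y) h_m(x,y,z)`.
Both are telescoping sums: `h_{m+1}(x,z) - h_{m+1}(x,y) = ∑ xⁱ (z^{m+1-i} - y^{m+1-i})`, and each
difference of powers factors as `(z - y) h_{m-i}(y,z)`; collecting by powers of `x` recovers
`h_m(x,y,z)`. The second identity is the same computation with `x` and `z` exchanged, using the
expansion of `h_m(x,y,z)` by powers of `z`.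
-/

/-- Complete homogeneous symmetric polynomial in two variables,
indexed by an integer degree, with the convention `h m = 0` for `m < 0`. -/
noncomputable def h2Z {R : Type*} [CommRing R] (x y : R) (m : ℤ) : R :=
  if 0 ≤ m then ∑ i ∈ Finset.range (m.toNat + 1), x ^ i * y ^ (m.toNat - i) else 0

/-- Complete homogeneous symmetric polynomial in three variables,
indexed by an integer degree, with the convention `h m = 0` for `m < 0`. -/
noncomputable def h3Z {R : Type*} [CommRing R] (x y z : R) (m : ℤ) : R :=
  if 0 ≤ m then
    ∑ i ∈ Finset.range (m.toNat + 1), ∑ j ∈ Finset.range (m.toNat + 1 - i),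
      x ^ i * y ^ j * z ^ (m.toNat - i - j)
  else 0

open Finset

namespace CompleteHomogeneous

variable {R : Type*} [CommRing R]

noncomputable def hsymm2 (x y : R) (m : ℕ) : R :=
  ∑ i ∈ range (m + 1), x ^ i * y ^ (m - i)

theorem pow_succ_sub_pow_succ (x y : R) (m : ℕ) :
    x ^ (m + 1) - y ^ (m + 1) = (x - y) * hsymm2 x y m := by
  rw [← geom_sum₂_mul, mul_comm, hsymm2, Nat.add_sub_cancel]

theorem h2Z_natCast (x y : R) (m : ℕ) : h2Z x y m = hsymm2 x y m := by
  simp [h2Z, hsymm2]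

theorem h2Z_zero (x y : R) : h2Z x y 0 = 1 := by
  simpa [hsymm2] using h2Z_natCast x y 0

theorem h3Z_neg (x y z : R) {m : ℤ} (hm : m < 0) : h3Z x y z m = 0 :=
  if_neg hm.not_ge

theorem h3Z_natCast_eq_sum_pow_mul (x y z : R) (m : ℕ) :
    h3Z x y z m = ∑ i ∈ range (m + 1), x ^ i * hsymm2 y z (m - i) := by
  simp only [h3Z, Nat.cast_nonneg, if_true, Int.toNat_natCast, hsymm2, mul_sum]
  refine sum_congr rfl fun i hi => ?_
  rw [show m + 1 - i = m - i + 1 by grind]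
  simp only [mul_assoc, Nat.sub_sub]

theorem h3Z_natCast_eq_sum_mul_pow (x y z : R) (m : ℕ) :
    h3Z x y z m = ∑ k ∈ range (m + 1), hsymm2 x y k * z ^ (m - k) := by
  simp only [h3Z, Nat.cast_nonneg, if_true, Int.toNat_natCast, hsymm2, sum_mul]
  rw [← sum_range_diag_flip]
  refine sum_congr rfl fun k hk => sum_congr rfl fun i hi => ?_
  rw [show m - i - (k - i) = m - k by grind]

theorem hsymm2_succ_eq_add_mul_h3Z_left (x y z : R) (m : ℕ) :
    hsymm2 x z (m + 1) = hsymm2 y z (m + 1) + (x - y) * h3Z x y z m := by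
  rw [h3Z_natCast_eq_sum_mul_pow, mul_sum, ← sub_eq_iff_eq_add', hsymm2, hsymm2, ← sum_sub_distrib,
    sum_range_succ']
  simp [← sub_mul, pow_succ_sub_pow_succ, mul_assoc]

theorem hsymm2_succ_eq_add_mul_h3Z_right (x y z : R) (m : ℕ) :
    hsymm2 x z (m + 1) = hsymm2 x y (m + 1) + (z - y) * h3Z x y z m := by
  rw [h3Z_natCast_eq_sum_pow_mul, mul_sum, ← sub_eq_iff_eq_add', hsymm2, hsymm2, ← sum_sub_distrib,
    sum_range_succ]
  simp only [Nat.sub_self, pow_zero, sub_self, add_zero]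
  refine sum_congr rfl fun i hi => ?_
  rw [← mul_sub, show m + 1 - i = m - i + 1 by grind, ← neg_sub, pow_succ_sub_pow_succ, ← neg_mul,
    neg_sub, mul_left_comm]

theorem h2Z_smul_add_h3Z_smul_eq {M : Type*} [AddCommGroup M] [Module R M]
    (x y z : R) (a b : M) {k : ℤ} (hk : 1 ≤ k) :
    h2Z x y (k - 1) • a + h2Z y z (k - 1) • b + h3Z x y z (k - 2) • ((x - y) • b + (z - y) • a)
      = h2Z x z (k - 1) • (a + b) := by
  obtain ⟨m, hm⟩ := Int.eq_ofNat_of_zero_le (sub_nonneg.2 hk)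
  cases m with
  | zero =>
    rw [hm, Nat.cast_zero, h3Z_neg x y z (by omega), h2Z_zero, h2Z_zero, h2Z_zero]
    simp only [zero_smul, add_zero, one_smul]
  | succ m =>
    rw [hm, show k - 2 = (m : ℤ) by omega, h2Z_natCast, h2Z_natCast, h2Z_natCast]
    match_scalars
    · linear_combination -hsymm2_succ_eq_add_mul_h3Z_right x y z m
    · linear_combination -hsymm2_succ_eq_add_mul_h3Z_left x y z m

end CompleteHomogeneous

/-- The coproduct `Δ` on `𝒜` is a chain map: `d(Δ(u_k)) = Δ(d(u_k))`, i.e.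
`∑_i [h_{k-1}(x_i,x_i')·ξ_i⊗1 + h_{k-1}(x_i',x_i'')·1⊗ξ_i +
h_{k-2}(x_i,x_i',x_i'')((x_i - x_i')·1⊗ξ_i + (x_i'' - x_i')·ξ_i⊗1)]
= ∑_i h_{k-1}(x_i, x_i'')·(ξ_i⊗1 + 1⊗ξ_i)`.
The identity is linear in the odd elements `ξ_i⊗1 = a i` and `1⊗ξ_i = b i`, so it is
stated in an arbitrary module over the commutative ring of the (even) variables. -/
theorem stmt4 {R : Type*} [CommRing R] {M : Type*} [AddCommGroup M] [Module R M]
    (n : ℕ) (x x' x'' : Fin n → R) (a b : Fin n → M) (k : ℤ) (hk : 1 ≤ k) :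
    ∑ i, (h2Z (x i) (x' i) (k - 1) • a i + h2Z (x' i) (x'' i) (k - 1) • b i
        + h3Z (x i) (x' i) (x'' i) (k - 2) •
            ((x i - x' i) • b i + (x'' i - x' i) • a i))
      = ∑ i, h2Z (x i) (x'' i) (k - 1) • (a i + b i) :=
  sum_congr rfl fun i _ =>
    CompleteHomogeneous.h2Z_smul_add_h3Z_smul_eq (x i) (x' i) (x'' i) (a i) (b i) hk
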